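/- arXiv:2106.04707 — 6 statements merged into one kernel-verified Lean document; each statement's English description precedes it below -/
import Mathlib

section
/- Let 0 < λ < 1, let μ_i, μ_j, p_i, p_j ∈ (0,1) with λ p_i < μ_i, λ p_i < μ_j, λ p_j < μ_i, λ p_j < μ_j, μ_i ≥ μ_j and p_i < p_j. Then swapping the probabilities does not increase the objective: [λ p_j (1-μ_i)/(μ_i - λ p_j) + λ p_i (1-μ_j)/(μ_j - λ p_i)] ≤ [λ p_i (1-μ_i)/(μ_i - λ p_i) + λ p_j (1-μ_j)/(μ_j - λ p_j)]. -/
/-- Exchange argument: sending the larger routing probability to the faster server does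
not increase the total steady-state mean queue length. -/
theorem routing_exchange_inequality (lam mui muj pi pj : ℝ)
    (hlam0 : 0 < lam) (hlam1 : lam < 1)
    (hmui0 : 0 < mui) (hmui1 : mui < 1) (hmuj0 : 0 < muj) (hmuj1 : muj < 1)
    (hpi0 : 0 < pi) (hpi1 : pi < 1) (hpj0 : 0 < pj) (hpj1 : pj < 1)
    (h1 : lam * pi < mui) (h2 : lam * pi < muj) (h3 : lam * pj < mui) (h4 : lam * pj < muj)
    (hmu : mui ≥ muj) (hp : pi < pj) :
    lam * pj * (1 - mui) / (mui - lam * pj) + lam * pi * (1 - muj) / (muj - lam * pi) ≤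
    lam * pi * (1 - mui) / (mui - lam * pi) + lam * pj * (1 - muj) / (muj - lam * pj) := by
  set a := lam * pi with ha
  set b := lam * pj with hb
  have ha0 : 0 < a := mul_pos hlam0 hpi0
  have hb0 : 0 < b := mul_pos hlam0 hpj0
  have hab : a < b := by
    apply mul_lt_mul_of_pos_left hp hlam0
  have d1 : 0 < mui - a := by linarith
  have d2 : 0 < mui - b := by linarith
  have d3 : 0 < muj - a := by linarith
  have d4 : 0 < muj - b := by linarith
  have ha1 : a < 1 := lt_of_lt_of_le h2 (le_of_lt hmuj1)
  have hb1 : b < 1 := lt_of_lt_of_le h4 (le_of_lt hmuj1)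
  have key :
      (a * (1 - mui) / (mui - a) + b * (1 - muj) / (muj - b)) -
      (b * (1 - mui) / (mui - b) + a * (1 - muj) / (muj - a)) =
      (b - a) * (mui - muj) *
        (mui * muj * (1 - a) * (1 - b) - a * b * (1 - mui) * (1 - muj)) /
        ((mui - a) * (mui - b) * (muj - a) * (muj - b)) := by
    field_simp
    ring
  have hnum : 0 ≤ (b - a) * (mui - muj) *
      (mui * muj * (1 - a) * (1 - b) - a * b * (1 - mui) * (1 - muj)) := by
    have h5 : a * b * (1 - mui) * (1 - muj) ≤ mui * muj * (1 - a) * (1 - b) := by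
      have s1 : a * b * ((1 - mui) * (1 - muj)) ≤ mui * muj * ((1 - mui) * (1 - muj)) := by
        have : a * b ≤ mui * muj :=
          mul_le_mul h1.le h4.le hb0.le hmui0.le
        exact mul_le_mul_of_nonneg_right this
          (mul_nonneg (by linarith) (by linarith))
      have s2 : mui * muj * ((1 - mui) * (1 - muj)) ≤ mui * muj * ((1 - a) * (1 - b)) := by
        have : (1 - mui) * (1 - muj) ≤ (1 - a) * (1 - b) :=
          mul_le_mul (by linarith) (by linarith) (by linarith) (by linarith)
        exact mul_le_mul_of_nonneg_left this (mul_pos hmui0 hmuj0).le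
      nlinarith [s1, s2]
    have := mul_nonneg (mul_nonneg (by linarith : (0:ℝ) ≤ b - a)
      (by linarith : (0:ℝ) ≤ mui - muj)) (by linarith : (0:ℝ) ≤
        mui * muj * (1 - a) * (1 - b) - a * b * (1 - mui) * (1 - muj))
    linarith
  have hden : 0 < (mui - a) * (mui - b) * (muj - a) * (muj - b) :=
    mul_pos (mul_pos (mul_pos d1 d2) d3) d4
  have := div_nonneg hnum hden.le
  linarith [key ▸ this]
end

section
/- In the optimal weighted random routing problem, if μ_i ≥ μ_j then the optimal routing probabilities satisfy p_i* ≥ p_j*. -/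
open Finset in
lemma key_ineq (μi μj A B : ℝ) (hA : 0 ≤ A) (hAB : A < B) (hB : B < μj)
    (hμ : μj ≤ μi) (hμi : μi < 1) (hμj : 0 < μj) :
    (A+B)/2*(1-μi)/(μi-(A+B)/2) + (A+B)/2*(1-μj)/(μj-(A+B)/2) <
      A*(1-μi)/(μi-A) + B*(1-μj)/(μj-B) := by
  set M := (A+B)/2 with hM
  have hMA : A < M := by rw [hM]; linarith
  have hMB : M < B := by rw [hM]; linarith
  have h1 : 0 < μi - A := by linarith
  have h2 : 0 < μi - M := by linarith
  have h3 : 0 < μj - M := by linarith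
  have h4 : 0 < μj - B := by linarith
  have hμi0 : 0 < μi := by linarith
  have hμj1 : μj < 1 := by linarith
  have hB0 : 0 < B := by linarith
  have hM0 : 0 < M := by linarith
  have e1 : A*(1-μi)/(μi-A) - M*(1-μi)/(μi-M) = μi*(1-μi)*(A-M)/((μi-A)*(μi-M)) := by
    field_simp; ring
  have e2 : B*(1-μj)/(μj-B) - M*(1-μj)/(μj-M) = μj*(1-μj)*(B-M)/((μj-B)*(μj-M)) := by
    field_simp; ring
  have H : (1-μi)*(μj-B) ≤ (1-μj)*(μi-B) := by
    nlinarith [mul_nonneg (sub_nonneg.2 hμ) (by linarith : (0:ℝ) ≤ 1 - B)]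
  have F3 : μi*(μj-M) ≤ μj*(μi-M) := by
    nlinarith [mul_nonneg (sub_nonneg.2 hμ) hM0.le]
  have G : (1-μi)*(μj-B)*(μi*(μj-M)) ≤ (1-μj)*(μi-B)*(μj*(μi-M)) :=
    mul_le_mul H F3 (by positivity) (by nlinarith)
  have key : μi*(1-μi)/((μi-A)*(μi-M)) < μj*(1-μj)/((μj-B)*(μj-M)) := by
    rw [div_lt_div_iff₀ (by positivity) (by positivity)]
    nlinarith [G, mul_pos (mul_pos hμj (by linarith : (0:ℝ) < 1 - μj)) h2]
  have hd : 0 < M - A := by linarith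
  have comb : A*(1-μi)/(μi-A) + B*(1-μj)/(μj-B) - (M*(1-μi)/(μi-M) + M*(1-μj)/(μj-M))
      = (M-A) * (μj*(1-μj)/((μj-B)*(μj-M)) - μi*(1-μi)/((μi-A)*(μi-M))) := by
    have hBM : B - M = M - A := by rw [hM]; ring
    rw [show A*(1-μi)/(μi-A) + B*(1-μj)/(μj-B) - (M*(1-μi)/(μi-M) + M*(1-μj)/(μj-M))
      = (A*(1-μi)/(μi-A) - M*(1-μi)/(μi-M)) + (B*(1-μj)/(μj-B) - M*(1-μj)/(μj-M)) by ring,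
      e1, e2, hBM]
    field_simp
    ring
  nlinarith [mul_pos hd (sub_pos.2 key)]

open Finset in
/-- In the optimal weighted random routing problem, a faster server receives a routing
probability at least as large: if `μ i ≥ μ j` then `p* i ≥ p* j`. -/
theorem optimal_routing_monotone (K : ℕ) (lam : ℝ) (mu pstar : Fin K → ℝ)
    (hlam0 : 0 < lam) (hlam1 : lam < 1)
    (hmu : ∀ i, 0 < mu i ∧ mu i < 1)
    (hstab : lam < ∑ i, mu i)
    (hfeas : (∀ i, 0 ≤ pstar i) ∧ (∑ i, pstar i = 1) ∧ (∀ i, lam * pstar i < mu i))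
    (hopt : ∀ p : Fin K → ℝ,
      ((∀ i, 0 ≤ p i) ∧ (∑ i, p i = 1) ∧ (∀ i, lam * p i < mu i)) →
      ∑ i, lam * pstar i * (1 - mu i) / (mu i - lam * pstar i) ≤
        ∑ i, lam * p i * (1 - mu i) / (mu i - lam * p i)) :
    ∀ i j, mu i ≥ mu j → pstar i ≥ pstar j := by
  obtain ⟨hp0, hp1, hps⟩ := hfeas
  intro i j hmuij
  by_contra hcon
  push_neg at hcon
  have hij : i ≠ j := by rintro rfl; exact lt_irrefl _ hcon
  set m : ℝ := (pstar i + pstar j)/2 with hm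
  set q : Fin K → ℝ := fun k => if k = i then m else if k = j then m else pstar k with hq
  have hqi : q i = m := by simp [hq]
  have hqj : q j = m := by simp [hq, hij.symm]
  have hqk : ∀ k, k ≠ i → k ≠ j → q k = pstar k := by
    intro k h1 h2; simp [hq, h1, h2]
  have hm0 : 0 ≤ m := by
    have := hp0 i; have := hp0 j; rw [hm]; linarith
  have hAB : lam * pstar i < lam * pstar j := by
    exact (mul_lt_mul_iff_right₀ hlam0).2 hcon
  have hBj : lam * pstar j < mu j := hps j
  have hlm : lam * m < mu j := by
    rw [hm]; nlinarith
  have hsplit : ∀ F : Fin K → ℝ, ∑ k, F k = F i + F j + ∑ k ∈ univ \ {i, j}, F k := by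
    intro F
    rw [← Finset.sum_sdiff (Finset.subset_univ ({i, j} : Finset (Fin K))),
      Finset.sum_pair hij]
    ring
  have hrest : ∀ F G : Fin K → ℝ, (∀ k, k ≠ i → k ≠ j → F k = G k) →
      ∑ k ∈ univ \ {i, j}, F k = ∑ k ∈ univ \ {i, j}, G k := by
    intro F G h
    apply Finset.sum_congr rfl
    intro k hk
    simp only [Finset.mem_sdiff, Finset.mem_insert, Finset.mem_singleton] at hk
    push_neg at hk
    exact h k hk.2.1 hk.2.2
  have hqfeas : (∀ k, 0 ≤ q k) ∧ (∑ k, q k = 1) ∧ (∀ k, lam * q k < mu k) := by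
    refine ⟨?_, ?_, ?_⟩
    · intro k
      by_cases h1 : k = i
      · subst h1; rw [hqi]; exact hm0
      by_cases h2 : k = j
      · subst h2; rw [hqj]; exact hm0
      · rw [hqk k h1 h2]; exact hp0 k
    · rw [hsplit q, hqi, hqj, hrest q pstar hqk, ← hp1, hsplit pstar, hm]
      ring
    · intro k
      by_cases h1 : k = i
      · subst h1; rw [hqi]; exact lt_of_lt_of_le hlm hmuij
      by_cases h2 : k = j
      · subst h2; rw [hqj]; exact hlm
      · rw [hqk k h1 h2]; exact hps k
  have hle := hopt q hqfeas
  set F : Fin K → ℝ := fun k => lam * pstar k * (1 - mu k) / (mu k - lam * pstar k) with hF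
  set Gq : Fin K → ℝ := fun k => lam * q k * (1 - mu k) / (mu k - lam * q k) with hG
  have hkey : Gq i + Gq j < F i + F j := by
    have hM : lam * m = (lam * pstar i + lam * pstar j)/2 := by rw [hm]; ring
    have h1 : Gq i = (lam * pstar i + lam * pstar j)/2 * (1 - mu i) /
        (mu i - (lam * pstar i + lam * pstar j)/2) := by
      rw [hG]; simp only [hqi, hM]
    have h2 : Gq j = (lam * pstar i + lam * pstar j)/2 * (1 - mu j) /
        (mu j - (lam * pstar i + lam * pstar j)/2) := by
      rw [hG]; simp only [hqj, hM]
    rw [h1, h2]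
    exact key_ineq (mu i) (mu j) (lam * pstar i) (lam * pstar j)
      (mul_nonneg hlam0.le (hp0 i)) hAB hBj hmuij (hmu i).2 (hmu j).1
  have hFG : ∑ k ∈ univ \ {i, j}, Gq k = ∑ k ∈ univ \ {i, j}, F k := by
    apply hrest
    intro k h1 h2
    rw [hG, hF]
    simp only [hqk k h1 h2]
  rw [hsplit F, hsplit Gq, hFG] at hle
  linarith
end

section
/- Suppose indices are ordered so that i ↦ s_i/μ_i = √((1−μ_i)/μ_i) is nondecreasing. If (Σ_{j=1}^m s_j)/(Σ_{j=1}^m μ_j − λ) ≤ s_i/μ_i for all i with m < i ≤ m+n (where s_i = √(μ_i(1−μ_i)) and Σ_{j=1}^m μ_j > λ), then (Σ_{j=1}^{m+n} s_j)/(Σ_{j=1}^{m+n} μ_j − λ) ≤ s_{m+n}/μ_{m+n}, and consequently the candidate routing probability to server m+n computed from support set {1,…,m+n}, namely μ_{m+n}/λ − (s_{m+n}/Σ_{j=1}^{m+n} s_j)·((Σ_{j=1}^{m+n} μ_j − λ)/λ), is ≤ 0. -/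
open Finset in
/-- No valid support set can strictly contain the optimal support set: the mediant-type
inequality, and nonpositivity of the candidate routing probability to server `m + n`. -/
theorem support_set_maximal (lam : ℝ) (mu : ℕ → ℝ) (m n : ℕ)
    (hlam0 : 0 < lam) (hlam1 : lam < 1) (hn : 1 ≤ n)
    (hmu : ∀ j ∈ Finset.Icc 1 (m + n), 0 < mu j ∧ mu j < 1)
    (s : ℕ → ℝ) (hs : ∀ j, s j = Real.sqrt (mu j * (1 - mu j)))
    (hmono : ∀ i ∈ Finset.Icc 1 (m + n), ∀ j ∈ Finset.Icc 1 (m + n),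
      i ≤ j → s i / mu i ≤ s j / mu j)
    (hml : lam < ∑ j ∈ Finset.Icc 1 m, mu j)
    (hratio : ∀ i, m < i → i ≤ m + n →
      (∑ j ∈ Finset.Icc 1 m, s j) / ((∑ j ∈ Finset.Icc 1 m, mu j) - lam) ≤ s i / mu i) :
    (∑ j ∈ Finset.Icc 1 (m + n), s j) / ((∑ j ∈ Finset.Icc 1 (m + n), mu j) - lam) ≤
      s (m + n) / mu (m + n) ∧
    mu (m + n) / lam -
      (s (m + n) / ∑ j ∈ Finset.Icc 1 (m + n), s j) *
        (((∑ j ∈ Finset.Icc 1 (m + n), mu j) - lam) / lam) ≤ 0 := by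
  have hNmem : m + n ∈ Finset.Icc 1 (m + n) := by
    simp [Finset.mem_Icc]; omega
  have hmuN : 0 < mu (m + n) := (hmu _ hNmem).1
  have hspos : ∀ j ∈ Finset.Icc 1 (m + n), 0 < s j := by
    intro j hj
    rw [hs j]
    exact Real.sqrt_pos.mpr (mul_pos (hmu j hj).1 (by linarith [(hmu j hj).2]))
  have hsNpos : 0 < s (m + n) := hspos _ hNmem
  have hicc : ∀ k : ℕ, Finset.Icc 1 k = Finset.Ioc 0 k := fun k => rfl
  have hB : (0:ℝ) < (∑ j ∈ Finset.Icc 1 m, mu j) - lam := by linarith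
  -- split sums
  have hsplit_s : (∑ j ∈ Finset.Icc 1 m, s j) + (∑ j ∈ Finset.Ioc m (m + n), s j)
      = ∑ j ∈ Finset.Icc 1 (m + n), s j := by
    rw [hicc, hicc]; exact Finset.sum_Ioc_consecutive _ (Nat.zero_le m) (Nat.le_add_right m n)
  have hsplit_mu : (∑ j ∈ Finset.Icc 1 m, mu j) + (∑ j ∈ Finset.Ioc m (m + n), mu j)
      = ∑ j ∈ Finset.Icc 1 (m + n), mu j := by
    rw [hicc, hicc]; exact Finset.sum_Ioc_consecutive _ (Nat.zero_le m) (Nat.le_add_right m n)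
  have hsub : Finset.Ioc m (m + n) ⊆ Finset.Icc 1 (m + n) := by
    intro j hj; simp only [Finset.mem_Ioc, Finset.mem_Icc] at *; omega
  -- key products
  have hA : (∑ j ∈ Finset.Icc 1 m, s j) * mu (m + n)
      ≤ s (m + n) * ((∑ j ∈ Finset.Icc 1 m, mu j) - lam) := by
    have := hratio (m + n) (by omega) le_rfl
    rw [div_le_div_iff₀ hB hmuN] at this
    linarith
  have hC : (∑ j ∈ Finset.Ioc m (m + n), s j) * mu (m + n)
      ≤ s (m + n) * (∑ j ∈ Finset.Ioc m (m + n), mu j) := by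
    rw [Finset.sum_mul, Finset.mul_sum]
    apply Finset.sum_le_sum
    intro i hi
    have hi' := hsub hi
    have := hmono i hi' (m + n) hNmem (Finset.mem_Ioc.mp hi).2
    rw [div_le_div_iff₀ (hmu i hi').1 hmuN] at this
    linarith
  have hD : (0:ℝ) < (∑ j ∈ Finset.Icc 1 (m + n), mu j) - lam := by
    have : (0:ℝ) ≤ ∑ j ∈ Finset.Ioc m (m + n), mu j :=
      Finset.sum_nonneg fun j hj => le_of_lt (hmu j (hsub hj)).1
    linarith [hsplit_mu]
  have hkey : (∑ j ∈ Finset.Icc 1 (m + n), s j) * mu (m + n)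
      ≤ s (m + n) * ((∑ j ∈ Finset.Icc 1 (m + n), mu j) - lam) := by
    rw [← hsplit_s, ← hsplit_mu]; ring_nf; ring_nf at hA hC ⊢; nlinarith
  have hSpos : (0:ℝ) < ∑ j ∈ Finset.Icc 1 (m + n), s j :=
    Finset.sum_pos hspos ⟨m + n, hNmem⟩
  constructor
  · rw [div_le_div_iff₀ hD hmuN]; linarith
  · rw [sub_nonpos, div_mul_div_comm]
    rw [div_le_div_iff₀ hlam0 (by positivity)]
    nlinarith
end

section
/- Let μ ∈ (0,1) and c₊ = 2μ²/(3(1−μ)(3−μ)). Define h(x) = ln μ + ln((1 + μx − μ)/(μ(1−μ))) − (1/μ + x)·ln((1 + μx − μ)/(1 + μx − μ − μ²x)) + c₊x². Then h(x) ≤ 0 for all x ∈ [0, (1−μ)/(2μ)]. -/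
/-!
Substituting `s = 1 - μ` and `t = μ x` turns `μ h(x)` into
`(1 + t) log (1 + t) - (s + t) log ((s + t) / s) + K t²` with `K = c₊ / μ`, on `0 ≤ t ≤ s / 2`.
This vanishes at `t = 0`, and by `log y ≤ y - 1` at `y = s (1 + t) / (s + t)` its derivative is at
most `t (2 K (s + t) - (1 - s)) / (s + t)`, which is `≤ 0` as soon as `3 s K ≤ 1 - s`.
-/

open Real Set

noncomputable def geomExponent (s K t : ℝ) : ℝ :=
  (1 + t) * log (1 + t) - (s + t) * log (s + t) + (s + t) * log s + K * t ^ 2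

lemma hasDerivAt_geomExponent {s t : ℝ} (K : ℝ) (h1 : 1 + t ≠ 0) (hs : s + t ≠ 0) :
    HasDerivAt (geomExponent s K) (log (1 + t) - log (s + t) + log s + 2 * K * t) t := by
  have hA := (hasDerivAt_mul_log h1).comp_const_add 1 t
  have hB := (hasDerivAt_mul_log hs).comp_const_add s t
  have hC := ((hasDerivAt_id t).const_add s).mul_const (log s)
  have hD := (hasDerivAt_pow 2 t).const_mul K
  exact (((hA.sub hB).add hC).add hD).congr_deriv (by ring)

lemma log_one_add_sub_log_add_add_log_le {s t : ℝ} (hs : 0 < s) (ht : 0 ≤ t) :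
    log (1 + t) - log (s + t) + log s ≤ (s - 1) * t / (s + t) := by
  have hst : 0 < s + t := by positivity
  have h := log_le_sub_one_of_pos (show 0 < s * (1 + t) / (s + t) by positivity)
  rw [log_div (by positivity) hst.ne', log_mul hs.ne' (by positivity)] at h
  calc log (1 + t) - log (s + t) + log s ≤ s * (1 + t) / (s + t) - 1 := by linarith
    _ = (s - 1) * t / (s + t) := by field_simp; ring

lemma geomExponent_nonpos {s K t : ℝ} (hs0 : 0 < s) (hs1 : s ≤ 1) (hK : 3 * s * K ≤ 1 - s)
    (ht : t ∈ Icc 0 (s / 2)) : geomExponent s K t ≤ 0 := by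
  have hderiv : ∀ u ∈ Icc 0 (s / 2),
      HasDerivAt (geomExponent s K) (log (1 + u) - log (s + u) + log s + 2 * K * u) u :=
    fun u hu ↦ hasDerivAt_geomExponent K (by linarith [hu.1]) (by linarith [hu.1])
  have hanti : AntitoneOn (geomExponent s K) (Icc 0 (s / 2)) := by
    refine antitoneOn_of_hasDerivWithinAt_nonpos (convex_Icc _ _)
      (fun u hu ↦ (hderiv u hu).continuousAt.continuousWithinAt)
      (fun u hu ↦ (hderiv u (interior_subset hu)).hasDerivWithinAt) fun u hu ↦ ?_
    rw [interior_Icc] at hu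
    have hsu : 0 < s + u := by linarith [hu.1]
    have hslope : 2 * K * (s + u) ≤ 1 - s := by
      rcases le_or_gt 0 K with hK0 | hK0
      · nlinarith [mul_nonneg hK0 (show 0 ≤ s - 2 * u by linarith [hu.2])]
      · nlinarith
    have hKu : (s - 1) * u / (s + u) ≤ -(2 * K * u) := by
      rw [div_le_iff₀ hsu]; nlinarith [hu.1]
    linarith [log_one_add_sub_log_add_add_log_le hs0 hu.1.le]
  have h0 : geomExponent s K 0 = 0 := by simp [geomExponent]
  simpa [h0] using hanti ⟨le_rfl, by linarith⟩ ht ht.1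

lemma mul_exponent_eq_geomExponent {mu x : ℝ} (hmu0 : 0 < mu) (hmu1 : mu < 1) (hx : 0 ≤ x) :
    mu * (log mu + log ((1 + mu * x - mu) / (mu * (1 - mu)))
        - (1 / mu + x) * log ((1 + mu * x - mu) / (1 + mu * x - mu - mu ^ 2 * x))
        + (2 * mu ^ 2 / (3 * (1 - mu) * (3 - mu))) * x ^ 2)
      = geomExponent (1 - mu) (2 * mu / (3 * (1 - mu) * (3 - mu))) (mu * x) := by
  have hs : 0 < 1 - mu := by linarith
  have h3 : 0 < 3 - mu := by linarith
  have hst : 0 < 1 + mu * x - mu := by nlinarith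
  have h1t : 0 < 1 + mu * x := by nlinarith
  have hden : 1 + mu * x - mu - mu ^ 2 * x = (1 - mu) * (1 + mu * x) := by ring
  rw [hden, log_div hst.ne' (by positivity), log_div hst.ne' (by positivity),
    log_mul hmu0.ne' hs.ne', log_mul hs.ne' h1t.ne', geomExponent,
    show 1 - mu + mu * x = 1 + mu * x - mu by ring]
  field_simp
  ring

/-- Key analytic estimate for the upper-tail Chernoff bound for geometric random
variables: `h(x) ≤ 0` on `[0, (1-μ)/(2μ)]` with `c₊ = 2μ²/(3(1-μ)(3-μ))`. -/
theorem geometric_upper_tail_exponent_bound (mu : ℝ) (hmu0 : 0 < mu) (hmu1 : mu < 1) :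
    ∀ x ∈ Set.Icc (0 : ℝ) ((1 - mu) / (2 * mu)),
      Real.log mu + Real.log ((1 + mu * x - mu) / (mu * (1 - mu)))
        - (1 / mu + x) * Real.log ((1 + mu * x - mu) / (1 + mu * x - mu - mu ^ 2 * x))
        + (2 * mu ^ 2 / (3 * (1 - mu) * (3 - mu))) * x ^ 2 ≤ 0 := by
  rintro x ⟨hx0, hx1⟩
  have ht : mu * x ∈ Icc 0 ((1 - mu) / 2) := by
    refine ⟨by positivity, ?_⟩
    rw [le_div_iff₀ (by positivity)] at hx1 ⊢
    linarith
  have hK : 3 * (1 - mu) * (2 * mu / (3 * (1 - mu) * (3 - mu))) ≤ 1 - (1 - mu) := by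
    have hs : 0 < 1 - mu := by linarith
    rw [mul_div_assoc', div_le_iff₀ (by nlinarith)]
    nlinarith [mul_pos (mul_pos hmu0 hs) hs]
  have h := geomExponent_nonpos (by linarith) (by linarith) hK ht
  rw [← mul_exponent_eq_geomExponent hmu0 hmu1 hx0] at h
  exact nonpos_of_mul_nonpos_right h hmu0
end

section
/- Let μ ∈ (0,1) and c₋ = μ²/(2(1−μ)). Define g(x) = ln(1 − μx/(1−μ)) − (1/μ − x)·ln(1 − μ²x/((1−μ)(1−μx))) + c₋x². Then g(x) ≤ 0 for all x ∈ [0, (1−μ)/(2μ)]. -/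
/-!
Put `t = μx/(1-μ)` and `F u = (1-u) log(1-u) + u - u²/2 = ∑_{k≥3} u^k/(k(k-1))`. A direct computation
gives `μ g(x) = F(μx) - (1-μ) F(t)`, with `μx = (1-μ) t`. Since `F'' u = u/(1-u) ≥ 0`, `F` is convex on
`[0,1)` with `F 0 = 0`, hence `F((1-μ) t) ≤ (1-μ) F(t)`; the range of `x` ensures `t ≤ 1/2 < 1`.
-/

open Real Set

namespace GeometricLowerTail

noncomputable def F (u : ℝ) : ℝ := (1 - u) * log (1 - u) + u - u ^ 2 / 2

lemma F_zero : F 0 = 0 := by simp [F]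

lemma hasDerivAt_F {u : ℝ} (hu : u < 1) : HasDerivAt F (-log (1 - u) - u) u := by
  have h1u : 1 - u ≠ 0 := by linarith
  have hsub : HasDerivAt (fun v : ℝ => 1 - v) (-1) u := by
    simpa using (hasDerivAt_id u).const_sub 1
  refine (((hsub.mul (hsub.log h1u)).add (hasDerivAt_id u)).sub
    ((hasDerivAt_pow 2 u).div_const 2)).congr_deriv ?_
  field_simp
  ring

lemma monotoneOn_neg_log_one_sub_sub_self :
    MonotoneOn (fun u : ℝ => -log (1 - u) - u) (Ico 0 1) := by
  intro u ⟨hu0, hu1⟩ v ⟨_, hv1⟩ huv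
  have h1u : 0 < 1 - u := by linarith
  have h1v : 0 < 1 - v := by linarith
  have hlog : 1 - ((1 - u) / (1 - v))⁻¹ ≤ log (1 - u) - log (1 - v) := by
    rw [← log_div h1u.ne' h1v.ne']
    exact one_sub_inv_le_log_of_pos (div_pos h1u h1v)
  have hratio : v - u ≤ 1 - ((1 - u) / (1 - v))⁻¹ := by
    rw [inv_div, one_sub_div h1u.ne', le_div_iff₀ h1u]
    nlinarith
  dsimp only
  linarith

lemma convexOn_F : ConvexOn ℝ (Ico 0 1) F := by
  refine MonotoneOn.convexOn_of_deriv (convex_Ico 0 1)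
    (fun u hu => (hasDerivAt_F hu.2).continuousAt.continuousWithinAt)
    (fun u hu => (hasDerivAt_F (interior_subset hu).2).differentiableAt.differentiableWithinAt) ?_
  rw [interior_Ico]
  refine (monotoneOn_neg_log_one_sub_sub_self.mono Ioo_subset_Ico_self).congr fun u hu => ?_
  exact ((hasDerivAt_F hu.2).deriv).symm

lemma F_mul_le {a t : ℝ} (ha0 : 0 ≤ a) (ha1 : a ≤ 1) (ht0 : 0 ≤ t) (ht1 : t < 1) :
    F (a * t) ≤ a * F t := by
  have := convexOn_F.2 ⟨ht0, ht1⟩ (left_mem_Ico.2 one_pos) ha0 (sub_nonneg.2 ha1) (by ring)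
  simpa [F_zero] using this

lemma mul_exponent_eq {mu x : ℝ} (hmu0 : 0 < mu) (hmu1 : mu < 1) (ht : mu * x / (1 - mu) < 1) :
    mu * (log (1 - mu * x / (1 - mu))
        - (1 / mu - x) * log (1 - mu ^ 2 * x / ((1 - mu) * (1 - mu * x)))
        + (mu ^ 2 / (2 * (1 - mu))) * x ^ 2)
      = F (mu * x) - (1 - mu) * F (mu * x / (1 - mu)) := by
  have h1mu : 0 < 1 - mu := by linarith
  have h1t : 0 < 1 - mu * x / (1 - mu) := by linarith
  have h1mux : 0 < 1 - mu * x := by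
    have := (div_lt_one h1mu).1 ht
    linarith
  have hratio : 1 - mu ^ 2 * x / ((1 - mu) * (1 - mu * x))
      = (1 - mu * x / (1 - mu)) / (1 - mu * x) := by
    field_simp
    ring
  rw [hratio, log_div h1t.ne' h1mux.ne']
  simp only [F]
  field_simp
  ring

end GeometricLowerTail

open GeometricLowerTail in
/-- Key analytic estimate for the lower-tail Chernoff bound for geometric random
variables: `g(x) ≤ 0` on `[0, (1-μ)/(2μ)]` with `c₋ = μ²/(2(1-μ))`. -/
theorem geometric_lower_tail_exponent_bound (mu : ℝ) (hmu0 : 0 < mu) (hmu1 : mu < 1) :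
    ∀ x ∈ Set.Icc (0 : ℝ) ((1 - mu) / (2 * mu)),
      Real.log (1 - mu * x / (1 - mu))
        - (1 / mu - x) * Real.log (1 - mu ^ 2 * x / ((1 - mu) * (1 - mu * x)))
        + (mu ^ 2 / (2 * (1 - mu))) * x ^ 2 ≤ 0 := by
  rintro x ⟨hx0, hx1⟩
  have h1mu : 0 < 1 - mu := by linarith
  have ht0 : 0 ≤ mu * x / (1 - mu) := by positivity
  have ht1 : mu * x / (1 - mu) < 1 := by
    rw [div_lt_one h1mu]
    have hmux : mu * ((1 - mu) / (2 * mu)) = (1 - mu) / 2 := by field_simp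
    nlinarith [mul_le_mul_of_nonneg_left hx1 hmu0.le]
  have hconvex := F_mul_le h1mu.le (by linarith) ht0 ht1
  rw [mul_div_cancel₀ _ h1mu.ne'] at hconvex
  refine nonpos_of_mul_nonpos_right ?_ hmu0
  rw [mul_exponent_eq hmu0 hmu1 ht1]
  linarith
end

section
/- For μ ∈ (0,1) and x ∈ [0, (1−μ)/(2μ)], the second derivative of h(x) = ln μ + ln((1+μx−μ)/(μ(1−μ))) − (1/μ + x)·ln((1+μx−μ)/(1+μx−μ−μ²x)) equals −μ²/((1−μ+μx)(1+μx)). -/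
/-- The second derivative of the Chernoff-exponent function
`h(x) = ln μ + ln((1+μx-μ)/(μ(1-μ))) - (1/μ + x) ln((1+μx-μ)/(1+μx-μ-μ²x))`
equals `-μ²/((1-μ+μx)(1+μx))` on `[0, (1-μ)/(2μ)]`. -/
theorem chernoff_exponent_second_deriv (mu : ℝ) (hmu0 : 0 < mu) (hmu1 : mu < 1)
    (h : ℝ → ℝ)
    (hh : ∀ x, h x = Real.log mu + Real.log ((1 + mu * x - mu) / (mu * (1 - mu)))
      - (1 / mu + x) * Real.log ((1 + mu * x - mu) / (1 + mu * x - mu - mu ^ 2 * x))) :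
    ∀ x ∈ Set.Icc (0 : ℝ) ((1 - mu) / (2 * mu)),
      deriv (deriv h) x = -mu ^ 2 / ((1 - mu + mu * x) * (1 + mu * x)) := by
  have h1m : (0:ℝ) < 1 - mu := by linarith
  set S : Set ℝ := Set.Ioi (-(1 - mu) / mu) with hS
  have hSopen : IsOpen S := isOpen_Ioi
  have hu : ∀ x ∈ S, 0 < 1 + mu * x - mu := by
    intro x hx
    have : -(1 - mu) / mu < x := hx
    have := (div_lt_iff₀ hmu0).mp this
    nlinarith
  have hv : ∀ x ∈ S, 0 < 1 + mu * x - mu - mu ^ 2 * x := by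
    intro x hx
    have h1 := hu x hx
    nlinarith [sq_nonneg mu]
  -- derivative of h on S
  have hd1 : ∀ x ∈ S, HasDerivAt h
      (Real.log (1 + mu * x - mu - mu ^ 2 * x) - Real.log (1 + mu * x - mu)) x := by
    intro x hx
    have heq : h =ᶠ[nhds x] fun y =>
        Real.log mu + (Real.log (1 + mu * y - mu) - Real.log (mu * (1 - mu)))
        - (1 / mu + y) * (Real.log (1 + mu * y - mu)
          - Real.log (1 + mu * y - mu - mu ^ 2 * y)) := by
      filter_upwards [hSopen.mem_nhds hx] with y hy
      have huy := hu y hy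
      have hvy := hv y hy
      rw [hh y, Real.log_div huy.ne' (mul_pos hmu0 h1m).ne', Real.log_div huy.ne' hvy.ne']
    have hU : HasDerivAt (fun y : ℝ => 1 + mu * y - mu) mu x := by
      have := ((hasDerivAt_id x).const_mul mu).const_add 1
      simpa using this.sub_const mu
    have hV : HasDerivAt (fun y : ℝ => 1 + mu * y - mu - mu ^ 2 * y) (mu - mu ^ 2) x := by
      have h2 : HasDerivAt (fun y : ℝ => mu ^ 2 * y) (mu ^ 2) x := by
        simpa using (hasDerivAt_id x).const_mul (mu ^ 2)
      exact hU.sub h2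
    have hx' := hu x hx
    have hx'' := hv x hx
    have hlogU : HasDerivAt (fun y : ℝ => Real.log (1 + mu * y - mu)) (mu / (1 + mu * x - mu)) x :=
      hU.log hx'.ne'
    have hlogV : HasDerivAt (fun y : ℝ => Real.log (1 + mu * y - mu - mu ^ 2 * y))
        ((mu - mu ^ 2) / (1 + mu * x - mu - mu ^ 2 * x)) x := hV.log hx''.ne'
    have hlin : HasDerivAt (fun y : ℝ => 1 / mu + y) 1 x := by
      simpa using (hasDerivAt_id x).const_add (1 / mu)
    have hH := ((hlogU.sub (hasDerivAt_const x (Real.log (mu * (1 - mu))))).const_add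
        (Real.log mu)).sub (hlin.mul (hlogU.sub hlogV))
    have hhd : HasDerivAt h
        (mu / (1 + mu * x - mu) - 0
          - (1 * (Real.log (1 + mu * x - mu) - Real.log (1 + mu * x - mu - mu ^ 2 * x))
            + (1 / mu + x) * (mu / (1 + mu * x - mu)
              - (mu - mu ^ 2) / (1 + mu * x - mu - mu ^ 2 * x)))) x :=
      HasDerivAt.congr_of_eventuallyEq hH heq
    convert hhd using 1
    rw [show 1 + mu * x - mu - mu ^ 2 * x = (1 - mu) * (1 + mu * x) by ring]
    have hb : 0 < 1 + mu * x := by nlinarith [hu x hx]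
    field_simp
    ring
  -- deriv h agrees with g on S
  have hg : Set.EqOn (deriv h)
      (fun x => Real.log (1 + mu * x - mu - mu ^ 2 * x) - Real.log (1 + mu * x - mu)) S :=
    fun x hx => (hd1 x hx).deriv
  intro x hx
  have hxS : x ∈ S := by
    have h0 : (0:ℝ) ≤ x := hx.1
    have : -(1 - mu) / mu < 0 := div_neg_of_neg_of_pos (by linarith) hmu0
    exact lt_of_lt_of_le this h0
  have heq2 : deriv h =ᶠ[nhds x] (fun x => Real.log (1 + mu * x - mu - mu ^ 2 * x)
      - Real.log (1 + mu * x - mu)) := by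
    filter_upwards [hSopen.mem_nhds hxS] with y hy using hg hy
  rw [Filter.EventuallyEq.deriv_eq heq2]
  have hux := hu x hxS
  have hvx := hv x hxS
  have hU : HasDerivAt (fun y : ℝ => 1 + mu * y - mu) mu x := by
    have := ((hasDerivAt_id x).const_mul mu).const_add 1
    simpa using this.sub_const mu
  have hV : HasDerivAt (fun y : ℝ => 1 + mu * y - mu - mu ^ 2 * y) (mu - mu ^ 2) x := by
    have h2 : HasDerivAt (fun y : ℝ => mu ^ 2 * y) (mu ^ 2) x := by
      simpa using (hasDerivAt_id x).const_mul (mu ^ 2)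
    exact hU.sub h2
  have hfin : HasDerivAt (fun x => Real.log (1 + mu * x - mu - mu ^ 2 * x)
      - Real.log (1 + mu * x - mu))
      ((mu - mu ^ 2) / (1 + mu * x - mu - mu ^ 2 * x) - mu / (1 + mu * x - mu)) x :=
    (hV.log hvx.ne').sub (hU.log hux.ne')
  rw [hfin.deriv]
  have hb : 0 < 1 + mu * x := by nlinarith
  rw [show 1 + mu * x - mu - mu ^ 2 * x = (1 - mu) * (1 + mu * x) by ring]
  rw [show 1 + mu * x - mu = 1 - mu + mu * x by ring]
  have hux' : (0:ℝ) < 1 - mu + mu * x := by linarith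
  field_simp
  ring
end
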